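/- In every execution of the Hemlock transition-system model, every thread that exits the critical section for a lock L (i.e., begins the exit code for L) eventually completes the exit code for L: either its CAS succeeds and it skips the remaining exit steps, or after it performs the exit doorstep its Grant field is eventually reset to none by its successor and it leaves the exit code. -/
import Mathlib


namespace Hemlock

/-- Program counter locations of a thread in the Hemlock algorithm. -/
inductive PC where
  | remainder  -- in the remainder section
  | entrySpin  -- in the entry code, spinning on the predecessor's Grant field
  | crit       -- in the critical section
  | exitCAS    -- in the exit code, about to perform the CAS on Tail
  | exitDoor   -- in the exit code, about to perform the exit doorstep (write Grant self := some L)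
  | exitSpin   -- in the exit code, spinning on its own Grant field
deriving DecidableEq

/-- A global state of the Hemlock transition system. -/
structure St (Thread Lock : Type) where
  Tail : Lock → Option Thread        -- the Tail field of each lock
  Grant : Thread → Option Lock       -- the Grant field of each thread
  pc : Thread → PC                   -- program counter of each thread
  lk : Thread → Option Lock          -- the lock currently being acquired/released by each thread
  pred : Thread → Option Thread      -- value returned by each thread's last SWAP

variable {Thread Lock : Type} [DecidableEq Thread] [DecidableEq Lock]

/-- The initial state: all Tail and Grant fields are none, all threads in the remainder. -/
def initSt : St Thread Lock :=
  ⟨fun _ => none, fun _ => none, fun _ => .remainder, fun _ => none, fun _ => none⟩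

/-- One atomic transition of thread `t`. -/
inductive Step (t : Thread) : St Thread Lock → St Thread Lock → Prop where
  /-- a step inside the remainder section -/
  | remainderStay (s : St Thread Lock) (h : s.pc t = .remainder) :
      Step t s s
  /-- the entry doorstep for lock `L`: atomic SWAP on `Tail L`, storing the old value in `pred`;
      if the SWAP returned `none` the thread enters the critical section, else it spins -/
  | doorstep (s : St Thread Lock) (L : Lock) (h : s.pc t = .remainder) :
      Step t s ⟨Function.update s.Tail L (some t), s.Grant,
        Function.update s.pc t (if s.Tail L = none then .crit else .entrySpin),
        Function.update s.lk t (some L),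
        Function.update s.pred t (s.Tail L)⟩
  /-- entry-code busy-wait loop: read `Grant p`; it is not yet `some L`, keep spinning -/
  | spinWait (s : St Thread Lock) (p : Thread) (L : Lock)
      (h : s.pc t = .entrySpin) (hp : s.pred t = some p) (hl : s.lk t = some L)
      (hg : s.Grant p ≠ some L) :
      Step t s s
  /-- entry-code busy-wait loop: read `Grant p = some L`; write `Grant p := none`
      and enter the critical section -/
  | spinAcquire (s : St Thread Lock) (p : Thread) (L : Lock)
      (h : s.pc t = .entrySpin) (hp : s.pred t = some p) (hl : s.lk t = some L)
      (hg : s.Grant p = some L) :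
      Step t s ⟨s.Tail, Function.update s.Grant p none,
        Function.update s.pc t .crit, s.lk, s.pred⟩
  /-- a step inside the critical section -/
  | critStay (s : St Thread Lock) (h : s.pc t = .crit) :
      Step t s s
  /-- leave the critical section and begin the exit code -/
  | exitStart (s : St Thread Lock) (h : s.pc t = .crit) :
      Step t s ⟨s.Tail, s.Grant, Function.update s.pc t .exitCAS, s.lk, s.pred⟩
  /-- successful CAS: `Tail L = some self`, so set `Tail L := none` and
      complete the exit code, returning to the remainder section -/
  | casSucc (s : St Thread Lock) (L : Lock)
      (h : s.pc t = .exitCAS) (hl : s.lk t = some L) (ht : s.Tail L = some t) :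
      Step t s ⟨Function.update s.Tail L none, s.Grant,
        Function.update s.pc t .remainder, Function.update s.lk t none, s.pred⟩
  /-- failed CAS: `Tail L ≠ some self`; proceed to the exit doorstep -/
  | casFail (s : St Thread Lock) (L : Lock)
      (h : s.pc t = .exitCAS) (hl : s.lk t = some L) (ht : s.Tail L ≠ some t) :
      Step t s ⟨s.Tail, s.Grant, Function.update s.pc t .exitDoor, s.lk, s.pred⟩
  /-- the exit doorstep: write `Grant self := some L` and start spinning on `Grant self` -/
  | exitDoorstep (s : St Thread Lock) (L : Lock)
      (h : s.pc t = .exitDoor) (hl : s.lk t = some L) :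
      Step t s ⟨s.Tail, Function.update s.Grant t (some L),
        Function.update s.pc t .exitSpin, s.lk, s.pred⟩
  /-- exit-code busy-wait loop: read `Grant self`; it is not yet `none`, keep spinning -/
  | exitSpinWait (s : St Thread Lock) (h : s.pc t = .exitSpin) (hg : s.Grant t ≠ none) :
      Step t s s
  /-- exit-code busy-wait loop: read `Grant self = none`; complete the exit code,
      returning to the remainder section -/
  | exitDone (s : St Thread Lock) (h : s.pc t = .exitSpin) (hg : s.Grant t = none) :
      Step t s ⟨s.Tail, s.Grant, Function.update s.pc t .remainder,
        Function.update s.lk t none, s.pred⟩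

/-- An execution of the Hemlock transition system: an infinite sequence of states starting
    from the initial state, where each step is one transition of the scheduled thread;
    every thread whose program counter is in the entry, exit or critical section eventually
    takes another step, and every thread leaves each critical section after finitely
    many steps. -/
structure Execution (Thread Lock : Type) [DecidableEq Thread] [DecidableEq Lock]
    [Fintype Thread] where
  states : ℕ → St Thread Lock
  sched : ℕ → Thread
  init : states 0 = initSt
  steps : ∀ n, Step (sched n) (states n) (states (n + 1))
  fair : ∀ n t, (states n).pc t ≠ PC.remainder → ∃ m, n ≤ m ∧ sched m = t
  critFinite : ∀ n t, (states n).pc t = PC.crit → ∃ m, n ≤ m ∧ (states m).pc t ≠ PC.crit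

variable [Fintype Thread]

/-- Thread `t` executes the entry doorstep (the SWAP) for lock `L` at time `n`. -/
def doorstepAt (E : Execution Thread Lock) (n : ℕ) (t : Thread) (L : Lock) : Prop :=
  E.sched n = t ∧ (E.states n).pc t = PC.remainder ∧
    (E.states (n + 1)).pc t ≠ PC.remainder ∧ (E.states (n + 1)).lk t = some L

/-- Thread `t` performs the CAS step of the exit code for lock `L` at time `n`
    (successful or not). -/
def casAt (E : Execution Thread Lock) (n : ℕ) (t : Thread) (L : Lock) : Prop :=
  E.sched n = t ∧ (E.states n).pc t = PC.exitCAS ∧ (E.states n).lk t = some L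

/-- Thread `t` performs the exit doorstep (the write `Grant t := some L`) at time `n`. -/
def exitDoorAt (E : Execution Thread Lock) (n : ℕ) (t : Thread) (L : Lock) : Prop :=
  E.sched n = t ∧ (E.states n).pc t = PC.exitDoor ∧ (E.states n).lk t = some L

/-- Thread `t` is in the critical section protected by `L` in state `s`. -/
def inCS (s : St Thread Lock) (t : Thread) (L : Lock) : Prop :=
  s.pc t = PC.crit ∧ s.lk t = some L

/-- Thread `t` is in the entry code for lock `L` in state `s`. -/
def inEntry (s : St Thread Lock) (t : Thread) (L : Lock) : Prop :=
  s.pc t = PC.entrySpin ∧ s.lk t = some L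

/-- Thread `t` enters the critical section protected by `L` at step `m`. -/
def entersCSAt (E : Execution Thread Lock) (m : ℕ) (t : Thread) (L : Lock) : Prop :=
  E.sched m = t ∧ (E.states m).pc t ≠ PC.crit ∧
    (E.states (m + 1)).pc t = PC.crit ∧ (E.states (m + 1)).lk t = some L

/-- Thread `t` completes its critical section protected by `L` at step `k`
    (leaving the critical section and beginning the exit code). -/
def exitsCSAt (E : Execution Thread Lock) (k : ℕ) (t : Thread) (L : Lock) : Prop :=
  E.sched k = t ∧ (E.states k).pc t = PC.crit ∧ (E.states k).lk t = some L ∧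
    (E.states (k + 1)).pc t ≠ PC.crit

/-- Thread `t` completes the exit code for lock `L` at step `k`
    (returning to the remainder section). -/
def completesExitAt (E : Execution Thread Lock) (k : ℕ) (t : Thread) (L : Lock) : Prop :=
  E.sched k = t ∧ (E.states k).lk t = some L ∧
    (E.states k).pc t ≠ PC.remainder ∧ (E.states (k + 1)).pc t = PC.remainder

/-- `m` is the first time at or after `n` at which thread `t` enters the
    critical section protected by `L`. -/
def firstEntryAfter (E : Execution Thread Lock) (n m : ℕ) (t : Thread) (L : Lock) : Prop :=
  n ≤ m ∧ entersCSAt E m t L ∧ ∀ k, n ≤ k → k < m → ¬ entersCSAt E k t L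

/-- At time `n`, thread `T` is spinning in the entry code waiting for `Grant w`
    to become `some L`: its next step reads `Grant w` inside the entry-code
    busy-wait loop with current lock `L` and `pred = some w`. -/
def spinningEntryFor (E : Execution Thread Lock) (n : ℕ) (T w : Thread) (L : Lock) : Prop :=
  (E.states n).pc T = PC.entrySpin ∧ (E.states n).pred T = some w ∧
    (E.states n).lk T = some L

/-- At time `n`, thread `T` is spinning on the word `Grant w`: its next step reads
    `Grant w` inside one of the two busy-wait loops (the entry-code loop with
    `pred = some w`, or the exit-code loop executed by `w` itself). -/
def spinningOn (E : Execution Thread Lock) (n : ℕ) (T w : Thread) : Prop :=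
  ((E.states n).pc T = PC.entrySpin ∧ (E.states n).pred T = some w) ∨
    (T = w ∧ (E.states n).pc T = PC.exitSpin)

/-- Lock `L` is associated with thread `T` at time `n`: `T` has executed the entry
    doorstep for `L` and has not yet completed the exit code for `L`. -/
def associated (E : Execution Thread Lock) (n : ℕ) (T : Thread) (L : Lock) : Prop :=
  ∃ m, m < n ∧ doorstepAt E m T L ∧ ∀ k, m < k → k < n → ¬ completesExitAt E k T L

/-! ### Global invariant of the Hemlock transition system -/

/-- The global inductive invariant. -/
structure Inv (s : St Thread Lock) : Prop where
  i0 : ∀ t, s.pc t = PC.remainder ↔ s.lk t = none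
  i1 : ∀ t, s.pc t ≠ PC.exitSpin → s.Grant t = none
  i4 : ∀ t L, (s.pc t = PC.exitDoor ∨ s.pc t = PC.exitSpin) → s.lk t = some L →
        s.Tail L ≠ some t
  i5 : ∀ L u, s.Tail L = some u → s.lk u = some L
  i6 : ∀ t, s.pc t = PC.entrySpin → s.pred t ≠ some t
  i7 : ∀ L p T, s.Tail L = some p → s.pc T = PC.entrySpin → s.lk T = some L →
        s.pred T ≠ some p
  i8 : ∀ T p L, s.pc T = PC.entrySpin → s.pred T = some p → s.lk T = some L →
        s.lk p = some L
  i9 : ∀ p T, s.pc p = PC.exitSpin → s.Grant p = none → s.pc T = PC.entrySpin →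
        s.pred T ≠ some p
  iu : ∀ p T T', s.pc T = PC.entrySpin → s.pred T = some p →
        s.pc T' = PC.entrySpin → s.pred T' = some p → T = T'
  i3 : ∀ t L, s.lk t = some L → s.pc t ≠ PC.remainder → s.pc t ≠ PC.exitSpin →
        s.Tail L ≠ some t →
        ∃ T, s.pc T = PC.entrySpin ∧ s.lk T = some L ∧ s.pred T = some t
  i3' : ∀ t L, s.lk t = some L → s.pc t = PC.exitSpin → s.Grant t = some L →
        ∃ T, s.pc T = PC.entrySpin ∧ s.lk T = some L ∧ s.pred T = some t

theorem invInit : Inv (initSt : St Thread Lock) := by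
  constructor <;> simp [initSt]

theorem invStep {u : Thread} {s s' : St Thread Lock} (st : Step u s s') (hv : Inv s) :
    Inv s' := by
  obtain ⟨i0, i1, i4, i5, i6, i7, i8, i9, iu, i3, i3'⟩ := hv
  cases st with
  | remainderStay h => exact ⟨i0, i1, i4, i5, i6, i7, i8, i9, iu, i3, i3'⟩
  | spinWait p L h hp hl hg => exact ⟨i0, i1, i4, i5, i6, i7, i8, i9, iu, i3, i3'⟩
  | critStay h => exact ⟨i0, i1, i4, i5, i6, i7, i8, i9, iu, i3, i3'⟩
  | exitSpinWait h hg => exact ⟨i0, i1, i4, i5, i6, i7, i8, i9, iu, i3, i3'⟩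
  | doorstep L0 h =>
    have hlkun : s.lk u = none := (i0 u).mp h
    set q : PC := if s.Tail L0 = none then PC.crit else PC.entrySpin with hqdef
    have hq : q = PC.crit ∨ q = PC.entrySpin := by
      rw [hqdef]; split_ifs <;> simp
    have hqr : q ≠ PC.remainder := by rcases hq with h' | h' <;> rw [h'] <;> simp
    have hqd : q ≠ PC.exitDoor := by rcases hq with h' | h' <;> rw [h'] <;> simp
    have hqs : q ≠ PC.exitSpin := by rcases hq with h' | h' <;> rw [h'] <;> simp
    have htlu : s.Tail L0 ≠ some u := fun hc => by
      have := i5 L0 u hc; rw [hlkun] at this; cases this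
    have lkSome : ∀ v, s.pc v ≠ PC.remainder → ∃ L', s.lk v = some L' := by
      intro v hv
      have : s.lk v ≠ none := fun hn => hv ((i0 v).mpr hn)
      exact Option.ne_none_iff_exists'.mp this
    refine ⟨?_, ?_, ?_, ?_, ?_, ?_, ?_, ?_, ?_, ?_, ?_⟩ <;> dsimp only
    · intro v
      rcases eq_or_ne v u with rfl | hv
      · simp only [Function.update_self]
        exact iff_of_false hqr (by simp)
      · simp only [Function.update_of_ne hv]; exact i0 v
    · intro v hv'
      rcases eq_or_ne v u with rfl | hv
      · exact i1 v (by rw [h]; simp)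
      · exact i1 v (by simpa [Function.update_of_ne hv] using hv')
    · intro v L hpcv hlkv
      rcases eq_or_ne v u with rfl | hv
      · simp only [Function.update_self] at hpcv
        rcases hpcv with h' | h'
        · exact absurd h' hqd
        · exact absurd h' hqs
      · simp only [Function.update_of_ne hv] at hpcv hlkv
        rcases eq_or_ne L L0 with rfl | hL
        · simp only [Function.update_self]
          intro hc; injection hc with hc; exact hv hc.symm
        · simp only [Function.update_of_ne hL]
          exact i4 v L hpcv hlkv
    · intro L v hv
      rcases eq_or_ne L L0 with rfl | hL
      · simp only [Function.update_self] at hv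
        injection hv with hv; subst hv
        simp only [Function.update_self]
      · simp only [Function.update_of_ne hL] at hv
        have hlv := i5 L v hv
        have hvu : v ≠ u := fun hc => by subst hc; rw [hlkun] at hlv; cases hlv
        simp only [Function.update_of_ne hvu]; exact hlv
    · intro v hv
      rcases eq_or_ne v u with rfl | hvu
      · simp only [Function.update_self]
        exact htlu
      · simp only [Function.update_of_ne hvu] at hv ⊢
        exact i6 v hv
    · intro L p T hTL hTpc hTlk
      rcases eq_or_ne T u with rfl | hTu
      · simp only [Function.update_self] at hTlk ⊢
        injection hTlk with hTlk; subst hTlk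
        simp only [Function.update_self] at hTL
        injection hTL with hTL; subst hTL
        exact htlu
      · simp only [Function.update_of_ne hTu] at hTpc hTlk ⊢
        rcases eq_or_ne L L0 with rfl | hL
        · simp only [Function.update_self] at hTL
          injection hTL with hTL; subst hTL
          intro hc
          have := i8 T u L hTpc hc hTlk
          rw [hlkun] at this; cases this
        · simp only [Function.update_of_ne hL] at hTL
          exact i7 L p T hTL hTpc hTlk
    · intro T p L hTpc hTpred hTlk
      rcases eq_or_ne T u with rfl | hTu
      · simp only [Function.update_self] at hTpred hTlk
        injection hTlk with hTlk; subst hTlk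
        have hlkp := i5 L0 p hTpred
        have hpu : p ≠ T := fun hc => by subst hc; rw [hlkun] at hlkp; cases hlkp
        simp only [Function.update_of_ne hpu]; exact hlkp
      · simp only [Function.update_of_ne hTu] at hTpc hTpred hTlk
        have hlkp := i8 T p L hTpc hTpred hTlk
        have hpu : p ≠ u := fun hc => by subst hc; rw [hlkun] at hlkp; cases hlkp
        simp only [Function.update_of_ne hpu]; exact hlkp
    · intro p T hppc hpg hTpc
      rcases eq_or_ne p u with rfl | hpu
      · simp only [Function.update_self] at hppc
        exact absurd hppc hqs
      · simp only [Function.update_of_ne hpu] at hppc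
        rcases eq_or_ne T u with rfl | hTu
        · simp only [Function.update_self]
          intro hc
          have hlkp := i5 L0 p hc
          exact i4 p L0 (Or.inr hppc) hlkp hc
        · simp only [Function.update_of_ne hTu] at hTpc ⊢
          exact i9 p T hppc hpg hTpc
    · intro p T T' hT hTp hT' hT'p
      rcases eq_or_ne T u with rfl | hTu
      · rcases eq_or_ne T' T with rfl | hT'u
        · rfl
        · exfalso
          simp only [Function.update_self] at hTp
          simp only [Function.update_of_ne hT'u] at hT' hT'p
          obtain ⟨L', hL'⟩ := lkSome T' (by rw [hT']; simp)
          have hlkp := i8 T' p L' hT' hT'p hL'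
          have hlkp0 := i5 L0 p hTp
          rw [hlkp] at hlkp0; injection hlkp0 with e; subst e
          exact i7 L' p T' hTp hT' hL' hT'p
      · rcases eq_or_ne T' u with rfl | hT'u
        · exfalso
          simp only [Function.update_self] at hT'p
          simp only [Function.update_of_ne hTu] at hT hTp
          obtain ⟨L', hL'⟩ := lkSome T (by rw [hT]; simp)
          have hlkp := i8 T p L' hT hTp hL'
          have hlkp0 := i5 L0 p hT'p
          rw [hlkp] at hlkp0; injection hlkp0 with e; subst e
          exact (i7 L' p T hT'p hT hL' hTp).elim
        · simp only [Function.update_of_ne hTu] at hT hTp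
          simp only [Function.update_of_ne hT'u] at hT' hT'p
          exact iu p T T' hT hTp hT' hT'p
    · intro v L hlkv hnr hnes hTne
      rcases eq_or_ne v u with rfl | hvu
      · exfalso
        simp only [Function.update_self] at hlkv hTne
        injection hlkv with e; subst e
        simp only [Function.update_self] at hTne
        exact hTne rfl
      · simp only [Function.update_of_ne hvu] at hlkv hnr hnes
        rcases eq_or_ne L L0 with rfl | hL
        · rcases eq_or_ne (s.Tail L) (some v) with htv | htv
          · refine ⟨u, ?_, ?_, ?_⟩
            · simp only [Function.update_self]
              rw [hqdef, if_neg (by rw [htv]; simp)]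
            · simp only [Function.update_self]
            · simp only [Function.update_self]; exact htv
          · obtain ⟨T, hT1, hT2, hT3⟩ := i3 v L hlkv hnr hnes htv
            have hTu : T ≠ u := fun hc => by subst hc; rw [h] at hT1; cases hT1
            exact ⟨T, by simp only [Function.update_of_ne hTu]; exact hT1,
              by simp only [Function.update_of_ne hTu]; exact hT2,
              by simp only [Function.update_of_ne hTu]; exact hT3⟩
        · simp only [Function.update_of_ne hL] at hTne
          obtain ⟨T, hT1, hT2, hT3⟩ := i3 v L hlkv hnr hnes hTne
          have hTu : T ≠ u := fun hc => by subst hc; rw [h] at hT1; cases hT1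
          exact ⟨T, by simp only [Function.update_of_ne hTu]; exact hT1,
            by simp only [Function.update_of_ne hTu]; exact hT2,
            by simp only [Function.update_of_ne hTu]; exact hT3⟩
    · intro v L hlkv hps hgv
      rcases eq_or_ne v u with rfl | hvu
      · simp only [Function.update_self] at hps
        exact absurd hps hqs
      · simp only [Function.update_of_ne hvu] at hlkv hps
        obtain ⟨T, hT1, hT2, hT3⟩ := i3' v L hlkv hps hgv
        have hTu : T ≠ u := fun hc => by subst hc; rw [h] at hT1; cases hT1
        exact ⟨T, by simp only [Function.update_of_ne hTu]; exact hT1,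
          by simp only [Function.update_of_ne hTu]; exact hT2,
          by simp only [Function.update_of_ne hTu]; exact hT3⟩
  | spinAcquire p L0 h hp hl hg =>
    have hpexit : s.pc p = PC.exitSpin := by
      by_contra hc; rw [i1 p hc] at hg; cases hg
    have hpu : p ≠ u := fun hc => by rw [hc, h] at hpexit; cases hpexit
    refine ⟨?_, ?_, ?_, i5, ?_, ?_, ?_, ?_, ?_, ?_, ?_⟩ <;> dsimp only
    · intro v
      rcases eq_or_ne v u with rfl | hv
      · simp only [Function.update_self]
        exact iff_of_false (by simp) (by rw [hl]; simp)
      · simp only [Function.update_of_ne hv]; exact i0 v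
    · intro v hv'
      rcases eq_or_ne v p with rfl | hvp
      · simp only [Function.update_self]
      · simp only [Function.update_of_ne hvp]
        rcases eq_or_ne v u with rfl | hvu
        · exact i1 v (by rw [h]; simp)
        · exact i1 v (by simpa [Function.update_of_ne hvu] using hv')
    · intro v L hpcv hlkv
      rcases eq_or_ne v u with rfl | hv
      · simp only [Function.update_self] at hpcv
        rcases hpcv with h' | h' <;> cases h'
      · simp only [Function.update_of_ne hv] at hpcv
        exact i4 v L hpcv hlkv
    · intro v hv
      rcases eq_or_ne v u with rfl | hvu
      · simp only [Function.update_self] at hv; cases hv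
      · simp only [Function.update_of_ne hvu] at hv; exact i6 v hv
    · intro L q T hTL hTpc hTlk
      rcases eq_or_ne T u with rfl | hTu
      · simp only [Function.update_self] at hTpc; cases hTpc
      · simp only [Function.update_of_ne hTu] at hTpc
        exact i7 L q T hTL hTpc hTlk
    · intro T q L hTpc hTpred hTlk
      rcases eq_or_ne T u with rfl | hTu
      · simp only [Function.update_self] at hTpc; cases hTpc
      · simp only [Function.update_of_ne hTu] at hTpc
        exact i8 T q L hTpc hTpred hTlk
    · intro q T hq hgq hT
      have hTu : T ≠ u := by
        rcases eq_or_ne T u with rfl | hTu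
        · simp only [Function.update_self] at hT; cases hT
        · exact hTu
      simp only [Function.update_of_ne hTu] at hT
      rcases eq_or_ne q p with rfl | hqp
      · intro hTq
        exact hTu (iu q T u hT hTq h hp)
      · simp only [Function.update_of_ne hqp] at hgq
        have hqu : q ≠ u := by
          rcases eq_or_ne q u with rfl | hqu
          · simp only [Function.update_self] at hq; cases hq
          · exact hqu
        simp only [Function.update_of_ne hqu] at hq
        exact i9 q T hq hgq hT
    · intro q T T' hT hTq hT' hT'q
      have hTu : T ≠ u := by
        rcases eq_or_ne T u with rfl | hTu
        · simp only [Function.update_self] at hT; cases hT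
        · exact hTu
      have hT'u : T' ≠ u := by
        rcases eq_or_ne T' u with rfl | hT'u
        · simp only [Function.update_self] at hT'; cases hT'
        · exact hT'u
      simp only [Function.update_of_ne hTu] at hT
      simp only [Function.update_of_ne hT'u] at hT'
      exact iu q T T' hT hTq hT' hT'q
    · intro v L hlkv hnr hnes hTl
      have hvp : v ≠ p := by
        rintro rfl
        simp only [Function.update_of_ne hpu] at hnes
        exact hnes hpexit
      have hnr' : s.pc v ≠ PC.remainder := by
        rcases eq_or_ne v u with rfl | hvu
        · rw [h]; simp
        · simpa [Function.update_of_ne hvu] using hnr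
      have hnes' : s.pc v ≠ PC.exitSpin := by
        rcases eq_or_ne v u with rfl | hvu
        · rw [h]; simp
        · simpa [Function.update_of_ne hvu] using hnes
      obtain ⟨T, hT1, hT2, hT3⟩ := i3 v L hlkv hnr' hnes' hTl
      have hTu : T ≠ u := fun hc => by
        subst hc; rw [hp] at hT3; injection hT3 with e; exact hvp e.symm
      exact ⟨T, by simp only [Function.update_of_ne hTu]; exact hT1, hT2, hT3⟩
    · intro v L hlkv hps hgv
      have hvu : v ≠ u := by
        rcases eq_or_ne v u with rfl | hvu
        · simp only [Function.update_self] at hps; cases hps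
        · exact hvu
      simp only [Function.update_of_ne hvu] at hps
      have hvp : v ≠ p := by
        rintro rfl
        simp only [Function.update_self] at hgv; cases hgv
      simp only [Function.update_of_ne hvp] at hgv
      obtain ⟨T, hT1, hT2, hT3⟩ := i3' v L hlkv hps hgv
      have hTu : T ≠ u := fun hc => by
        subst hc; rw [hp] at hT3; injection hT3 with e; exact hvp e.symm
      exact ⟨T, by simp only [Function.update_of_ne hTu]; exact hT1, hT2, hT3⟩
  | exitStart h =>
    have hlku : s.lk u ≠ none := fun hn => by
      have := (i0 u).mpr hn; rw [h] at this; cases this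
    refine ⟨?_, ?_, ?_, i5, ?_, ?_, ?_, ?_, ?_, ?_, ?_⟩ <;> dsimp only
    · intro v
      rcases eq_or_ne v u with rfl | hv
      · simp only [Function.update_self]
        exact iff_of_false (by simp) hlku
      · simp only [Function.update_of_ne hv]; exact i0 v
    · intro v hv'
      rcases eq_or_ne v u with rfl | hvu
      · exact i1 v (by rw [h]; simp)
      · exact i1 v (by simpa [Function.update_of_ne hvu] using hv')
    · intro v L hpcv hlkv
      rcases eq_or_ne v u with rfl | hv
      · simp only [Function.update_self] at hpcv
        rcases hpcv with h' | h' <;> cases h'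
      · simp only [Function.update_of_ne hv] at hpcv
        exact i4 v L hpcv hlkv
    · intro v hv
      rcases eq_or_ne v u with rfl | hvu
      · simp only [Function.update_self] at hv; cases hv
      · simp only [Function.update_of_ne hvu] at hv; exact i6 v hv
    · intro L q T hTL hTpc hTlk
      rcases eq_or_ne T u with rfl | hTu
      · simp only [Function.update_self] at hTpc; cases hTpc
      · simp only [Function.update_of_ne hTu] at hTpc
        exact i7 L q T hTL hTpc hTlk
    · intro T q L hTpc hTpred hTlk
      rcases eq_or_ne T u with rfl | hTu
      · simp only [Function.update_self] at hTpc; cases hTpc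
      · simp only [Function.update_of_ne hTu] at hTpc
        exact i8 T q L hTpc hTpred hTlk
    · intro q T hq hgq hT
      have hTu : T ≠ u := by
        rcases eq_or_ne T u with rfl | hTu
        · simp only [Function.update_self] at hT; cases hT
        · exact hTu
      have hqu : q ≠ u := by
        rcases eq_or_ne q u with rfl | hqu
        · simp only [Function.update_self] at hq; cases hq
        · exact hqu
      simp only [Function.update_of_ne hTu] at hT
      simp only [Function.update_of_ne hqu] at hq
      exact i9 q T hq hgq hT
    · intro q T T' hT hTq hT' hT'q
      have hTu : T ≠ u := by
        rcases eq_or_ne T u with rfl | hTu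
        · simp only [Function.update_self] at hT; cases hT
        · exact hTu
      have hT'u : T' ≠ u := by
        rcases eq_or_ne T' u with rfl | hT'u
        · simp only [Function.update_self] at hT'; cases hT'
        · exact hT'u
      simp only [Function.update_of_ne hTu] at hT
      simp only [Function.update_of_ne hT'u] at hT'
      exact iu q T T' hT hTq hT' hT'q
    · intro v L hlkv hnr hnes hTl
      have hnr' : s.pc v ≠ PC.remainder := by
        rcases eq_or_ne v u with rfl | hvu
        · rw [h]; simp
        · simpa [Function.update_of_ne hvu] using hnr
      have hnes' : s.pc v ≠ PC.exitSpin := by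
        rcases eq_or_ne v u with rfl | hvu
        · rw [h]; simp
        · simpa [Function.update_of_ne hvu] using hnes
      obtain ⟨T, hT1, hT2, hT3⟩ := i3 v L hlkv hnr' hnes' hTl
      have hTu : T ≠ u := fun hc => by rw [hc, h] at hT1; cases hT1
      exact ⟨T, by simp only [Function.update_of_ne hTu]; exact hT1, hT2, hT3⟩
    · intro v L hlkv hps hgv
      have hvu : v ≠ u := by
        rcases eq_or_ne v u with rfl | hvu
        · simp only [Function.update_self] at hps; cases hps
        · exact hvu
      simp only [Function.update_of_ne hvu] at hps
      obtain ⟨T, hT1, hT2, hT3⟩ := i3' v L hlkv hps hgv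
      have hTu : T ≠ u := fun hc => by rw [hc, h] at hT1; cases hT1
      exact ⟨T, by simp only [Function.update_of_ne hTu]; exact hT1, hT2, hT3⟩
  | casSucc L0 h hl ht =>
    refine ⟨?_, ?_, ?_, ?_, ?_, ?_, ?_, ?_, ?_, ?_, ?_⟩ <;> dsimp only
    · intro v
      rcases eq_or_ne v u with rfl | hv
      · simp [Function.update_self]
      · simp only [Function.update_of_ne hv]; exact i0 v
    · intro v hv'
      rcases eq_or_ne v u with rfl | hvu
      · exact i1 v (by rw [h]; simp)
      · exact i1 v (by simpa [Function.update_of_ne hvu] using hv')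
    · intro v L hpcv hlkv
      have hvu : v ≠ u := by
        rcases eq_or_ne v u with rfl | hvu
        · simp only [Function.update_self] at hpcv
          rcases hpcv with h' | h' <;> cases h'
        · exact hvu
      simp only [Function.update_of_ne hvu] at hpcv hlkv
      rcases eq_or_ne L L0 with rfl | hL
      · simp [Function.update_self]
      · simp only [Function.update_of_ne hL]
        exact i4 v L hpcv hlkv
    · intro L v hv
      rcases eq_or_ne L L0 with rfl | hL
      · simp only [Function.update_self] at hv; cases hv
      · simp only [Function.update_of_ne hL] at hv
        have hlv := i5 L v hv
        have hvu : v ≠ u := fun hc => by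
          subst hc; rw [hl] at hlv; injection hlv with e; exact hL e.symm
        simp only [Function.update_of_ne hvu]; exact hlv
    · intro v hv
      rcases eq_or_ne v u with rfl | hvu
      · simp only [Function.update_self] at hv; cases hv
      · simp only [Function.update_of_ne hvu] at hv; exact i6 v hv
    · intro L q T hTL hTpc hTlk
      rcases eq_or_ne L L0 with rfl | hL
      · simp only [Function.update_self] at hTL; cases hTL
      · simp only [Function.update_of_ne hL] at hTL
        have hTu : T ≠ u := by
          rcases eq_or_ne T u with rfl | hTu
          · simp only [Function.update_self] at hTpc; cases hTpc
          · exact hTu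
        simp only [Function.update_of_ne hTu] at hTpc hTlk
        exact i7 L q T hTL hTpc hTlk
    · intro T q L hTpc hTpred hTlk
      have hTu : T ≠ u := by
        rcases eq_or_ne T u with rfl | hTu
        · simp only [Function.update_self] at hTpc; cases hTpc
        · exact hTu
      simp only [Function.update_of_ne hTu] at hTpc hTlk
      have hlkq := i8 T q L hTpc hTpred hTlk
      have hqu : q ≠ u := by
        rintro rfl
        rw [hl] at hlkq; injection hlkq with e
        exact i7 L0 q T ht hTpc (by rw [hTlk, e]) hTpred
      simp only [Function.update_of_ne hqu]; exact hlkq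
    · intro q T hq hgq hT
      have hTu : T ≠ u := by
        rcases eq_or_ne T u with rfl | hTu
        · simp only [Function.update_self] at hT; cases hT
        · exact hTu
      have hqu : q ≠ u := by
        rcases eq_or_ne q u with rfl | hqu
        · simp only [Function.update_self] at hq; cases hq
        · exact hqu
      simp only [Function.update_of_ne hTu] at hT
      simp only [Function.update_of_ne hqu] at hq
      exact i9 q T hq hgq hT
    · intro q T T' hT hTq hT' hT'q
      have hTu : T ≠ u := by
        rcases eq_or_ne T u with rfl | hTu
        · simp only [Function.update_self] at hT; cases hT
        · exact hTu
      have hT'u : T' ≠ u := by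
        rcases eq_or_ne T' u with rfl | hT'u
        · simp only [Function.update_self] at hT'; cases hT'
        · exact hT'u
      simp only [Function.update_of_ne hTu] at hT
      simp only [Function.update_of_ne hT'u] at hT'
      exact iu q T T' hT hTq hT' hT'q
    · intro v L hlkv hnr hnes hTl
      have hvu : v ≠ u := by
        rintro rfl
        simp only [Function.update_self] at hlkv; cases hlkv
      simp only [Function.update_of_ne hvu] at hlkv hnr hnes
      have hTl' : s.Tail L ≠ some v := by
        rcases eq_or_ne L L0 with rfl | hL
        · rw [ht]; intro hc; injection hc with e; exact hvu e.symm
        · simpa [Function.update_of_ne hL] using hTl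
      obtain ⟨T, hT1, hT2, hT3⟩ := i3 v L hlkv hnr hnes hTl'
      have hTu : T ≠ u := fun hc => by rw [hc, h] at hT1; cases hT1
      exact ⟨T, by simp only [Function.update_of_ne hTu]; exact hT1,
        by simp only [Function.update_of_ne hTu]; exact hT2, hT3⟩
    · intro v L hlkv hps hgv
      have hvu : v ≠ u := by
        rcases eq_or_ne v u with rfl | hvu
        · simp only [Function.update_self] at hps; cases hps
        · exact hvu
      simp only [Function.update_of_ne hvu] at hlkv hps
      obtain ⟨T, hT1, hT2, hT3⟩ := i3' v L hlkv hps hgv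
      have hTu : T ≠ u := fun hc => by rw [hc, h] at hT1; cases hT1
      exact ⟨T, by simp only [Function.update_of_ne hTu]; exact hT1,
        by simp only [Function.update_of_ne hTu]; exact hT2, hT3⟩
  | casFail L0 h hl ht =>
    have hlku : s.lk u ≠ none := by rw [hl]; simp
    refine ⟨?_, ?_, ?_, i5, ?_, ?_, ?_, ?_, ?_, ?_, ?_⟩ <;> dsimp only
    · intro v
      rcases eq_or_ne v u with rfl | hv
      · simp only [Function.update_self]
        exact iff_of_false (by simp) hlku
      · simp only [Function.update_of_ne hv]; exact i0 v
    · intro v hv'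
      rcases eq_or_ne v u with rfl | hvu
      · exact i1 v (by rw [h]; simp)
      · exact i1 v (by simpa [Function.update_of_ne hvu] using hv')
    · intro v L hpcv hlkv
      rcases eq_or_ne v u with rfl | hvu
      · rw [hl] at hlkv; injection hlkv with e; subst e
        exact ht
      · simp only [Function.update_of_ne hvu] at hpcv
        exact i4 v L hpcv hlkv
    · intro v hv
      rcases eq_or_ne v u with rfl | hvu
      · simp only [Function.update_self] at hv; cases hv
      · simp only [Function.update_of_ne hvu] at hv; exact i6 v hv
    · intro L q T hTL hTpc hTlk
      rcases eq_or_ne T u with rfl | hTu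
      · simp only [Function.update_self] at hTpc; cases hTpc
      · simp only [Function.update_of_ne hTu] at hTpc
        exact i7 L q T hTL hTpc hTlk
    · intro T q L hTpc hTpred hTlk
      rcases eq_or_ne T u with rfl | hTu
      · simp only [Function.update_self] at hTpc; cases hTpc
      · simp only [Function.update_of_ne hTu] at hTpc
        exact i8 T q L hTpc hTpred hTlk
    · intro q T hq hgq hT
      have hTu : T ≠ u := by
        rcases eq_or_ne T u with rfl | hTu
        · simp only [Function.update_self] at hT; cases hT
        · exact hTu
      have hqu : q ≠ u := by
        rcases eq_or_ne q u with rfl | hqu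
        · simp only [Function.update_self] at hq; cases hq
        · exact hqu
      simp only [Function.update_of_ne hTu] at hT
      simp only [Function.update_of_ne hqu] at hq
      exact i9 q T hq hgq hT
    · intro q T T' hT hTq hT' hT'q
      have hTu : T ≠ u := by
        rcases eq_or_ne T u with rfl | hTu
        · simp only [Function.update_self] at hT; cases hT
        · exact hTu
      have hT'u : T' ≠ u := by
        rcases eq_or_ne T' u with rfl | hT'u
        · simp only [Function.update_self] at hT'; cases hT'
        · exact hT'u
      simp only [Function.update_of_ne hTu] at hT
      simp only [Function.update_of_ne hT'u] at hT'
      exact iu q T T' hT hTq hT' hT'q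
    · intro v L hlkv hnr hnes hTl
      have hnr' : s.pc v ≠ PC.remainder := by
        rcases eq_or_ne v u with rfl | hvu
        · rw [h]; simp
        · simpa [Function.update_of_ne hvu] using hnr
      have hnes' : s.pc v ≠ PC.exitSpin := by
        rcases eq_or_ne v u with rfl | hvu
        · rw [h]; simp
        · simpa [Function.update_of_ne hvu] using hnes
      obtain ⟨T, hT1, hT2, hT3⟩ := i3 v L hlkv hnr' hnes' hTl
      have hTu : T ≠ u := fun hc => by rw [hc, h] at hT1; cases hT1
      exact ⟨T, by simp only [Function.update_of_ne hTu]; exact hT1, hT2, hT3⟩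
    · intro v L hlkv hps hgv
      have hvu : v ≠ u := by
        rcases eq_or_ne v u with rfl | hvu
        · simp only [Function.update_self] at hps; cases hps
        · exact hvu
      simp only [Function.update_of_ne hvu] at hps
      obtain ⟨T, hT1, hT2, hT3⟩ := i3' v L hlkv hps hgv
      have hTu : T ≠ u := fun hc => by rw [hc, h] at hT1; cases hT1
      exact ⟨T, by simp only [Function.update_of_ne hTu]; exact hT1, hT2, hT3⟩
  | exitDoorstep L0 h hl =>
    have hlku : s.lk u ≠ none := by rw [hl]; simp
    have htu : s.Tail L0 ≠ some u := i4 u L0 (Or.inl h) hl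
    refine ⟨?_, ?_, ?_, i5, ?_, ?_, ?_, ?_, ?_, ?_, ?_⟩ <;> dsimp only
    · intro v
      rcases eq_or_ne v u with rfl | hv
      · simp only [Function.update_self]
        exact iff_of_false (by simp) hlku
      · simp only [Function.update_of_ne hv]; exact i0 v
    · intro v hv'
      rcases eq_or_ne v u with rfl | hvu
      · simp only [Function.update_self] at hv'; exact absurd rfl hv'
      · simp only [Function.update_of_ne hvu] at hv' ⊢
        exact i1 v hv'
    · intro v L hpcv hlkv
      rcases eq_or_ne v u with rfl | hvu
      · rw [hl] at hlkv; injection hlkv with e; subst e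
        exact htu
      · simp only [Function.update_of_ne hvu] at hpcv
        exact i4 v L hpcv hlkv
    · intro v hv
      rcases eq_or_ne v u with rfl | hvu
      · simp only [Function.update_self] at hv; cases hv
      · simp only [Function.update_of_ne hvu] at hv; exact i6 v hv
    · intro L q T hTL hTpc hTlk
      rcases eq_or_ne T u with rfl | hTu
      · simp only [Function.update_self] at hTpc; cases hTpc
      · simp only [Function.update_of_ne hTu] at hTpc
        exact i7 L q T hTL hTpc hTlk
    · intro T q L hTpc hTpred hTlk
      rcases eq_or_ne T u with rfl | hTu
      · simp only [Function.update_self] at hTpc; cases hTpc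
      · simp only [Function.update_of_ne hTu] at hTpc
        exact i8 T q L hTpc hTpred hTlk
    · intro q T hq hgq hT
      have hTu : T ≠ u := by
        rcases eq_or_ne T u with rfl | hTu
        · simp only [Function.update_self] at hT; cases hT
        · exact hTu
      have hqu : q ≠ u := by
        rintro rfl
        simp only [Function.update_self] at hgq; cases hgq
      simp only [Function.update_of_ne hTu] at hT
      simp only [Function.update_of_ne hqu] at hq hgq
      exact i9 q T hq hgq hT
    · intro q T T' hT hTq hT' hT'q
      have hTu : T ≠ u := by
        rcases eq_or_ne T u with rfl | hTu
        · simp only [Function.update_self] at hT; cases hT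
        · exact hTu
      have hT'u : T' ≠ u := by
        rcases eq_or_ne T' u with rfl | hT'u
        · simp only [Function.update_self] at hT'; cases hT'
        · exact hT'u
      simp only [Function.update_of_ne hTu] at hT
      simp only [Function.update_of_ne hT'u] at hT'
      exact iu q T T' hT hTq hT' hT'q
    · intro v L hlkv hnr hnes hTl
      have hvu : v ≠ u := by
        rintro rfl
        simp only [Function.update_self] at hnes; exact hnes rfl
      simp only [Function.update_of_ne hvu] at hnr hnes
      obtain ⟨T, hT1, hT2, hT3⟩ := i3 v L hlkv hnr hnes hTl
      have hTu : T ≠ u := fun hc => by rw [hc, h] at hT1; cases hT1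
      exact ⟨T, by simp only [Function.update_of_ne hTu]; exact hT1, hT2, hT3⟩
    · intro v L hlkv hps hgv
      rcases eq_or_ne v u with rfl | hvu
      · rw [hl] at hlkv; injection hlkv with e; subst e
        obtain ⟨T, hT1, hT2, hT3⟩ := i3 v L0 hl (by rw [h]; simp) (by rw [h]; simp) htu
        have hTu : T ≠ v := fun hc => by rw [hc, h] at hT1; cases hT1
        exact ⟨T, by simp only [Function.update_of_ne hTu]; exact hT1, hT2, hT3⟩
      · simp only [Function.update_of_ne hvu] at hps hgv
        obtain ⟨T, hT1, hT2, hT3⟩ := i3' v L hlkv hps hgv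
        have hTu : T ≠ u := fun hc => by rw [hc, h] at hT1; cases hT1
        exact ⟨T, by simp only [Function.update_of_ne hTu]; exact hT1, hT2, hT3⟩
  | exitDone h hg =>
    have nowaiter : ∀ T, s.pc T = PC.entrySpin → s.pred T ≠ some u :=
      fun T hT => i9 u T h hg hT
    refine ⟨?_, ?_, ?_, ?_, ?_, ?_, ?_, ?_, ?_, ?_, ?_⟩ <;> dsimp only
    · intro v
      rcases eq_or_ne v u with rfl | hv
      · simp [Function.update_self]
      · simp only [Function.update_of_ne hv]; exact i0 v
    · intro v hv'
      rcases eq_or_ne v u with rfl | hvu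
      · exact hg
      · exact i1 v (by simpa [Function.update_of_ne hvu] using hv')
    · intro v L hpcv hlkv
      have hvu : v ≠ u := by
        rcases eq_or_ne v u with rfl | hvu
        · simp only [Function.update_self] at hpcv
          rcases hpcv with h' | h' <;> cases h'
        · exact hvu
      simp only [Function.update_of_ne hvu] at hpcv hlkv
      exact i4 v L hpcv hlkv
    · intro L v hv
      have hlv := i5 L v hv
      have hvu : v ≠ u := by
        rintro rfl
        exact i4 v L (Or.inr h) hlv hv
      simp only [Function.update_of_ne hvu]; exact hlv
    · intro v hv
      rcases eq_or_ne v u with rfl | hvu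
      · simp only [Function.update_self] at hv; cases hv
      · simp only [Function.update_of_ne hvu] at hv; exact i6 v hv
    · intro L q T hTL hTpc hTlk
      have hTu : T ≠ u := by
        rcases eq_or_ne T u with rfl | hTu
        · simp only [Function.update_self] at hTpc; cases hTpc
        · exact hTu
      simp only [Function.update_of_ne hTu] at hTpc hTlk
      exact i7 L q T hTL hTpc hTlk
    · intro T q L hTpc hTpred hTlk
      have hTu : T ≠ u := by
        rcases eq_or_ne T u with rfl | hTu
        · simp only [Function.update_self] at hTpc; cases hTpc
        · exact hTu
      simp only [Function.update_of_ne hTu] at hTpc hTlk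
      have hlkq := i8 T q L hTpc hTpred hTlk
      have hqu : q ≠ u := fun hc => by
        subst hc; exact nowaiter T hTpc hTpred
      simp only [Function.update_of_ne hqu]; exact hlkq
    · intro q T hq hgq hT
      have hTu : T ≠ u := by
        rcases eq_or_ne T u with rfl | hTu
        · simp only [Function.update_self] at hT; cases hT
        · exact hTu
      have hqu : q ≠ u := by
        rcases eq_or_ne q u with rfl | hqu
        · simp only [Function.update_self] at hq; cases hq
        · exact hqu
      simp only [Function.update_of_ne hTu] at hT
      simp only [Function.update_of_ne hqu] at hq
      exact i9 q T hq hgq hT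
    · intro q T T' hT hTq hT' hT'q
      have hTu : T ≠ u := by
        rcases eq_or_ne T u with rfl | hTu
        · simp only [Function.update_self] at hT; cases hT
        · exact hTu
      have hT'u : T' ≠ u := by
        rcases eq_or_ne T' u with rfl | hT'u
        · simp only [Function.update_self] at hT'; cases hT'
        · exact hT'u
      simp only [Function.update_of_ne hTu] at hT
      simp only [Function.update_of_ne hT'u] at hT'
      exact iu q T T' hT hTq hT' hT'q
    · intro v L hlkv hnr hnes hTl
      have hvu : v ≠ u := by
        rintro rfl
        simp only [Function.update_self] at hlkv; cases hlkv
      simp only [Function.update_of_ne hvu] at hlkv hnr hnes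
      obtain ⟨T, hT1, hT2, hT3⟩ := i3 v L hlkv hnr hnes hTl
      have hTu : T ≠ u := fun hc => by rw [hc, h] at hT1; cases hT1
      exact ⟨T, by simp only [Function.update_of_ne hTu]; exact hT1,
        by simp only [Function.update_of_ne hTu]; exact hT2, hT3⟩
    · intro v L hlkv hps hgv
      have hvu : v ≠ u := by
        rcases eq_or_ne v u with rfl | hvu
        · simp only [Function.update_self] at hps; cases hps
        · exact hvu
      simp only [Function.update_of_ne hvu] at hlkv hps
      obtain ⟨T, hT1, hT2, hT3⟩ := i3' v L hlkv hps hgv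
      have hTu : T ≠ u := fun hc => by rw [hc, h] at hT1; cases hT1
      exact ⟨T, by simp only [Function.update_of_ne hTu]; exact hT1,
        by simp only [Function.update_of_ne hTu]; exact hT2, hT3⟩

theorem invAll (E : Execution Thread Lock) : ∀ n, Inv (E.states n)
  | 0 => E.init ▸ invInit
  | n + 1 => invStep (E.steps n) (invAll E n)

/-- Frame lemma: a step of thread `u` does not change the pc, lk, pred of `v ≠ u`. -/
theorem frame {u v : Thread} {s s' : St Thread Lock} (st : Step u s s') (h : v ≠ u) :
    s'.pc v = s.pc v ∧ s'.lk v = s.lk v ∧ s'.pred v = s.pred v := by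
  cases st <;> exact ⟨by simp [Function.update_of_ne h], by simp [Function.update_of_ne h],
    by simp [Function.update_of_ne h]⟩

/-- Frame lemma for `Grant v`. -/
theorem grantFrame {u v : Thread} {s s' : St Thread Lock} (st : Step u s s')
    (h1 : s.pc u = PC.exitDoor → u ≠ v)
    (h2 : s.pc u = PC.entrySpin → s.pred u ≠ some v) :
    s'.Grant v = s.Grant v := by
  cases st with
  | exitDoorstep L0 h hl => exact Function.update_of_ne (Ne.symm (h1 h)) _ _
  | spinAcquire p L0 h hp hl hg =>
    exact Function.update_of_ne (Ne.symm fun hc => h2 h (by rw [← hc]; exact hp)) _ _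
  | _ => rfl

/-- What a step of `t` at `exitCAS` must be. -/
theorem stepExitCAS {t : Thread} {s s' : St Thread Lock} {L : Lock} (st : Step t s s')
    (h : s.pc t = PC.exitCAS) (hl : s.lk t = some L) :
    (s.Tail L = some t ∧ s' = ⟨Function.update s.Tail L none, s.Grant,
        Function.update s.pc t PC.remainder, Function.update s.lk t none, s.pred⟩) ∨
    (s.Tail L ≠ some t ∧ s' = ⟨s.Tail, s.Grant, Function.update s.pc t PC.exitDoor,
        s.lk, s.pred⟩) := by
  cases st with
  | casSucc L0 h0 hl0 ht0 =>
    rw [hl] at hl0; injection hl0 with e; subst e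
    exact Or.inl ⟨ht0, rfl⟩
  | casFail L0 h0 hl0 ht0 =>
    rw [hl] at hl0; injection hl0 with e; subst e
    exact Or.inr ⟨ht0, rfl⟩
  | remainderStay h0 => exact absurd h0 (by rw [h]; simp)
  | doorstep L0 h0 => exact absurd h0 (by rw [h]; simp)
  | spinWait p L0 h0 hp hl0 hg => exact absurd h0 (by rw [h]; simp)
  | spinAcquire p L0 h0 hp hl0 hg => exact absurd h0 (by rw [h]; simp)
  | critStay h0 => exact absurd h0 (by rw [h]; simp)
  | exitStart h0 => exact absurd h0 (by rw [h]; simp)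
  | exitDoorstep L0 h0 hl0 => exact absurd h0 (by rw [h]; simp)
  | exitSpinWait h0 hg => exact absurd h0 (by rw [h]; simp)
  | exitDone h0 hg => exact absurd h0 (by rw [h]; simp)

/-- What a step of `t` at `exitDoor` must be. -/
theorem stepExitDoor {t : Thread} {s s' : St Thread Lock} {L : Lock} (st : Step t s s')
    (h : s.pc t = PC.exitDoor) (hl : s.lk t = some L) :
    s' = ⟨s.Tail, Function.update s.Grant t (some L),
        Function.update s.pc t PC.exitSpin, s.lk, s.pred⟩ := by
  cases st with
  | exitDoorstep L0 h0 hl0 =>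
    rw [hl] at hl0; injection hl0 with e; subst e
    rfl
  | remainderStay h0 => exact absurd h0 (by rw [h]; simp)
  | doorstep L0 h0 => exact absurd h0 (by rw [h]; simp)
  | spinWait p L0 h0 hp hl0 hg => exact absurd h0 (by rw [h]; simp)
  | spinAcquire p L0 h0 hp hl0 hg => exact absurd h0 (by rw [h]; simp)
  | critStay h0 => exact absurd h0 (by rw [h]; simp)
  | exitStart h0 => exact absurd h0 (by rw [h]; simp)
  | casSucc L0 h0 hl0 ht0 => exact absurd h0 (by rw [h]; simp)
  | casFail L0 h0 hl0 ht0 => exact absurd h0 (by rw [h]; simp)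
  | exitSpinWait h0 hg => exact absurd h0 (by rw [h]; simp)
  | exitDone h0 hg => exact absurd h0 (by rw [h]; simp)

/-- A step of `t` at `exitSpin` with nonempty `Grant t` is a no-op. -/
theorem stepExitSpinWait {t : Thread} {s s' : St Thread Lock} (st : Step t s s')
    (h : s.pc t = PC.exitSpin) (hg : s.Grant t ≠ none) : s' = s := by
  cases st with
  | exitSpinWait h0 hg0 => rfl
  | exitDone h0 hg0 => exact absurd hg0 hg
  | remainderStay h0 => exact absurd h0 (by rw [h]; simp)
  | doorstep L0 h0 => exact absurd h0 (by rw [h]; simp)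
  | spinWait p L0 h0 hp hl0 hg0 => exact absurd h0 (by rw [h]; simp)
  | spinAcquire p L0 h0 hp hl0 hg0 => exact absurd h0 (by rw [h]; simp)
  | critStay h0 => exact absurd h0 (by rw [h]; simp)
  | exitStart h0 => exact absurd h0 (by rw [h]; simp)
  | casSucc L0 h0 hl0 ht0 => exact absurd h0 (by rw [h]; simp)
  | casFail L0 h0 hl0 ht0 => exact absurd h0 (by rw [h]; simp)
  | exitDoorstep L0 h0 hl0 => exact absurd h0 (by rw [h]; simp)

/-- A step of `t` at `exitSpin` with `Grant t = none` completes the exit code. -/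
theorem stepExitDone {t : Thread} {s s' : St Thread Lock} (st : Step t s s')
    (h : s.pc t = PC.exitSpin) (hg : s.Grant t = none) :
    s' = ⟨s.Tail, s.Grant, Function.update s.pc t PC.remainder,
        Function.update s.lk t none, s.pred⟩ := by
  cases st with
  | exitDone h0 hg0 => rfl
  | exitSpinWait h0 hg0 => exact absurd hg hg0
  | remainderStay h0 => exact absurd h0 (by rw [h]; simp)
  | doorstep L0 h0 => exact absurd h0 (by rw [h]; simp)
  | spinWait p L0 h0 hp hl0 hg0 => exact absurd h0 (by rw [h]; simp)
  | spinAcquire p L0 h0 hp hl0 hg0 => exact absurd h0 (by rw [h]; simp)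
  | critStay h0 => exact absurd h0 (by rw [h]; simp)
  | exitStart h0 => exact absurd h0 (by rw [h]; simp)
  | casSucc L0 h0 hl0 ht0 => exact absurd h0 (by rw [h]; simp)
  | casFail L0 h0 hl0 ht0 => exact absurd h0 (by rw [h]; simp)
  | exitDoorstep L0 h0 hl0 => exact absurd h0 (by rw [h]; simp)

/-- A step of a waiting thread whose predecessor's `Grant` is not yet set is a no-op. -/
theorem stepSpinWait {t w : Thread} {s s' : St Thread Lock} {L : Lock} (st : Step t s s')
    (h : s.pc t = PC.entrySpin) (hp : s.pred t = some w) (hl : s.lk t = some L)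
    (hg : s.Grant w ≠ some L) : s' = s := by
  cases st with
  | spinWait p L0 h0 hp0 hl0 hg0 => rfl
  | spinAcquire p L0 h0 hp0 hl0 hg0 =>
    rw [hp] at hp0; injection hp0 with e1; subst e1
    rw [hl] at hl0; injection hl0 with e2; subst e2
    exact absurd hg0 hg
  | remainderStay h0 => exact absurd h0 (by rw [h]; simp)
  | doorstep L0 h0 => exact absurd h0 (by rw [h]; simp)
  | critStay h0 => exact absurd h0 (by rw [h]; simp)
  | exitStart h0 => exact absurd h0 (by rw [h]; simp)
  | casSucc L0 h0 hl0 ht0 => exact absurd h0 (by rw [h]; simp)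
  | casFail L0 h0 hl0 ht0 => exact absurd h0 (by rw [h]; simp)
  | exitDoorstep L0 h0 hl0 => exact absurd h0 (by rw [h]; simp)
  | exitSpinWait h0 hg0 => exact absurd h0 (by rw [h]; simp)
  | exitDone h0 hg0 => exact absurd h0 (by rw [h]; simp)

/-- A step of a waiting thread whose predecessor's `Grant` is set acquires the lock. -/
theorem stepSpinAcquire {t w : Thread} {s s' : St Thread Lock} {L : Lock} (st : Step t s s')
    (h : s.pc t = PC.entrySpin) (hp : s.pred t = some w) (hl : s.lk t = some L)
    (hg : s.Grant w = some L) :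
    s' = ⟨s.Tail, Function.update s.Grant w none,
        Function.update s.pc t PC.crit, s.lk, s.pred⟩ := by
  cases st with
  | spinAcquire p L0 h0 hp0 hl0 hg0 =>
    rw [hp] at hp0; injection hp0 with e1; subst e1
    rfl
  | spinWait p L0 h0 hp0 hl0 hg0 =>
    rw [hp] at hp0; injection hp0 with e1; subst e1
    rw [hl] at hl0; injection hl0 with e2; subst e2
    exact absurd hg hg0
  | remainderStay h0 => exact absurd h0 (by rw [h]; simp)
  | doorstep L0 h0 => exact absurd h0 (by rw [h]; simp)
  | critStay h0 => exact absurd h0 (by rw [h]; simp)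
  | exitStart h0 => exact absurd h0 (by rw [h]; simp)
  | casSucc L0 h0 hl0 ht0 => exact absurd h0 (by rw [h]; simp)
  | casFail L0 h0 hl0 ht0 => exact absurd h0 (by rw [h]; simp)
  | exitDoorstep L0 h0 hl0 => exact absurd h0 (by rw [h]; simp)
  | exitSpinWait h0 hg0 => exact absurd h0 (by rw [h]; simp)
  | exitDone h0 hg0 => exact absurd h0 (by rw [h]; simp)

theorem propagate (P : ℕ → Prop) (a : ℕ) (hP : P a)
    (hstep : ∀ k, a ≤ k → P k → P (k + 1)) : ∀ k, a ≤ k → P k := by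
  intro k hk
  induction k with
  | zero => exact (Nat.le_zero.mp hk) ▸ hP
  | succ k ih =>
    rcases Nat.lt_or_ge a (k + 1) with hlt | hge
    · exact hstep k (Nat.lt_succ_iff.mp hlt) (ih (Nat.lt_succ_iff.mp hlt))
    · exact (le_antisymm hk hge) ▸ hP

theorem exists_least_sched (E : Execution Thread Lock) (n : ℕ) (t : Thread)
    (h : (E.states n).pc t ≠ PC.remainder) :
    ∃ m, n ≤ m ∧ E.sched m = t ∧ ∀ k, n ≤ k → k < m → E.sched k ≠ t := by
  classical
  have hex : ∃ m, n ≤ m ∧ E.sched m = t := E.fair n t h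
  refine ⟨Nat.find hex, (Nat.find_spec hex).1, (Nat.find_spec hex).2, ?_⟩
  intro k hk hk' hkt
  exact Nat.find_min hex hk' ⟨hk, hkt⟩

/-- Every thread that exits the critical section for a lock `L` (begins the exit code
for `L`) eventually completes the exit code for `L`: either its CAS succeeds and it
skips the remaining exit steps, or after it performs the exit doorstep its `Grant`
field is eventually reset to `none` and it leaves the exit code. -/
theorem exit_code_completes {Thread Lock : Type} [DecidableEq Thread] [DecidableEq Lock]
    [Fintype Thread] (E : Execution Thread Lock) (L : Lock) (t : Thread) (n : ℕ)
    (hpc : (E.states n).pc t = PC.exitCAS) (hlk : (E.states n).lk t = some L) :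
    ∃ m, n ≤ m ∧ completesExitAt E m t L ∧
      (((E.states m).pc t = PC.exitCAS ∧ (E.states m).Tail L = some t) ∨
       ((E.states m).pc t = PC.exitSpin ∧ (E.states m).Grant t = none)) := by
  classical
  have inv := invAll E
  -- Phase A: `t` stays at `exitCAS` until it is next scheduled, at time `m0`.
  obtain ⟨m0, hnm0, hsm0, hmin0⟩ := exists_least_sched E n t (by rw [hpc]; simp)
  have P1 : ∀ k, n ≤ k → k ≤ m0 →
      ((E.states k).pc t = PC.exitCAS ∧ (E.states k).lk t = some L) := by
    refine propagate _ n (fun _ => ⟨hpc, hlk⟩) ?_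
    intro k hk ih hk1
    have hk0 : k < m0 := hk1
    obtain ⟨p1, p2⟩ := ih (Nat.le_of_lt hk0)
    have hne : t ≠ E.sched k := fun hc => hmin0 k hk hk0 hc.symm
    obtain ⟨e1, e2, _⟩ := frame (E.steps k) hne
    exact ⟨by rw [e1]; exact p1, by rw [e2]; exact p2⟩
  obtain ⟨hpc0, hlk0⟩ := P1 m0 hnm0 le_rfl
  have st0 := E.steps m0
  rw [hsm0] at st0
  rcases stepExitCAS st0 hpc0 hlk0 with ⟨htl, heq⟩ | ⟨htl, heq⟩
  · -- the CAS succeeds: the exit code is complete at `m0`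
    refine ⟨m0, hnm0, ⟨hsm0, hlk0, by rw [hpc0]; simp, ?_⟩, Or.inl ⟨hpc0, htl⟩⟩
    rw [heq]; simp [Function.update_self]
  · -- the CAS fails: there is a successor `T` spinning on `Grant t`
    obtain ⟨T, hT1, hT2, hT3⟩ :=
      (inv m0).i3 t L hlk0 (by rw [hpc0]; simp) (by rw [hpc0]; simp) htl
    have hTt : T ≠ t := fun hc => by rw [hc, hpc0] at hT1; cases hT1
    have htT : t ≠ T := fun hc => hTt hc.symm
    have A1 : (E.states (m0 + 1)).pc t = PC.exitDoor := by
      rw [heq]; simp [Function.update_self]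
    have A2 : (E.states (m0 + 1)).lk t = some L := by rw [heq]; exact hlk0
    have A3 : (E.states (m0 + 1)).pc T = PC.entrySpin := by
      rw [heq]; show Function.update _ t _ T = _
      rw [Function.update_of_ne hTt]; exact hT1
    have A4 : (E.states (m0 + 1)).lk T = some L := by rw [heq]; exact hT2
    have A5 : (E.states (m0 + 1)).pred T = some t := by rw [heq]; exact hT3
    -- Phase B: `t` stays at `exitDoor`, `T` keeps spinning, until `t` is scheduled at `m1`.
    obtain ⟨m1, hm1, hsm1, hmin1⟩ := exists_least_sched E (m0 + 1) t (by rw [A1]; simp)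
    have P2 : ∀ k, m0 + 1 ≤ k → k ≤ m1 →
        ((E.states k).pc t = PC.exitDoor ∧ (E.states k).lk t = some L ∧
         (E.states k).pc T = PC.entrySpin ∧ (E.states k).lk T = some L ∧
         (E.states k).pred T = some t) := by
      refine propagate _ (m0 + 1) (fun _ => ⟨A1, A2, A3, A4, A5⟩) ?_
      intro k hk ih hk1
      have hk0 : k < m1 := hk1
      obtain ⟨p1, p2, p3, p4, p5⟩ := ih (Nat.le_of_lt hk0)
      have hne : t ≠ E.sched k := fun hc => hmin1 k hk hk0 hc.symm
      by_cases hTq : E.sched k = T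
      · have st := E.steps k
        rw [hTq] at st
        have hgr : (E.states k).Grant t ≠ some L := by
          rw [(inv k).i1 t (by rw [p1]; simp)]; simp
        have hid := stepSpinWait st p3 p5 p4 hgr
        rw [hid]
        exact ⟨p1, p2, p3, p4, p5⟩
      · obtain ⟨e1, e2, _⟩ := frame (E.steps k) hne
        obtain ⟨f1, f2, f3⟩ := frame (E.steps k)
          (show T ≠ E.sched k from fun hc => hTq hc.symm)
        exact ⟨by rw [e1]; exact p1, by rw [e2]; exact p2, by rw [f1]; exact p3,
          by rw [f2]; exact p4, by rw [f3]; exact p5⟩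
    obtain ⟨q1, q2, q3, q4, q5⟩ := P2 m1 hm1 le_rfl
    have st1 := E.steps m1
    rw [hsm1] at st1
    have heq1 := stepExitDoor st1 q1 q2
    have C1 : (E.states (m1 + 1)).pc t = PC.exitSpin := by
      rw [heq1]; simp [Function.update_self]
    have C2 : (E.states (m1 + 1)).lk t = some L := by rw [heq1]; exact q2
    have C3 : (E.states (m1 + 1)).Grant t = some L := by
      rw [heq1]; simp [Function.update_self]
    have C4 : (E.states (m1 + 1)).pc T = PC.entrySpin := by
      rw [heq1]; show Function.update _ t _ T = _
      rw [Function.update_of_ne hTt]; exact q3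
    have C5 : (E.states (m1 + 1)).lk T = some L := by rw [heq1]; exact q4
    have C6 : (E.states (m1 + 1)).pred T = some t := by rw [heq1]; exact q5
    -- Phase C: `Grant t = some L` until `T` is scheduled at `m2` and acquires.
    obtain ⟨m2, hm2, hsm2, hmin2⟩ := exists_least_sched E (m1 + 1) T (by rw [C4]; simp)
    have P3 : ∀ k, m1 + 1 ≤ k → k ≤ m2 →
        ((E.states k).pc t = PC.exitSpin ∧ (E.states k).lk t = some L ∧
         (E.states k).Grant t = some L ∧ (E.states k).pc T = PC.entrySpin ∧
         (E.states k).lk T = some L ∧ (E.states k).pred T = some t) := by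
      refine propagate _ (m1 + 1) (fun _ => ⟨C1, C2, C3, C4, C5, C6⟩) ?_
      intro k hk ih hk1
      have hk0 : k < m2 := hk1
      obtain ⟨p1, p2, p3, p4, p5, p6⟩ := ih (Nat.le_of_lt hk0)
      have hneT : T ≠ E.sched k := fun hc => hmin2 k hk hk0 hc.symm
      by_cases hts : E.sched k = t
      · have st := E.steps k
        rw [hts] at st
        have hid := stepExitSpinWait st p1 (by rw [p3]; simp)
        rw [hid]
        exact ⟨p1, p2, p3, p4, p5, p6⟩
      · have hnet : t ≠ E.sched k := fun hc => hts hc.symm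
        obtain ⟨e1, e2, _⟩ := frame (E.steps k) hnet
        obtain ⟨f1, f2, f3⟩ := frame (E.steps k) hneT
        have hgr : (E.states (k + 1)).Grant t = (E.states k).Grant t := by
          refine grantFrame (E.steps k) (fun _ hc => hts hc) ?_
          intro hpcu hpu
          have hlkne : (E.states k).lk (E.sched k) ≠ none := fun hn => by
            have := ((inv k).i0 (E.sched k)).mpr hn
            rw [hpcu] at this; cases this
          obtain ⟨L', hL'⟩ := Option.ne_none_iff_exists'.mp hlkne
          have hlkt := (inv k).i8 (E.sched k) t L' hpcu hpu hL'
          rw [p2] at hlkt; injection hlkt with e; subst e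
          exact hneT ((inv k).iu t (E.sched k) T hpcu hpu p4 p6).symm
        exact ⟨by rw [e1]; exact p1, by rw [e2]; exact p2, by rw [hgr]; exact p3,
          by rw [f1]; exact p4, by rw [f2]; exact p5, by rw [f3]; exact p6⟩
    obtain ⟨r1, r2, r3, r4, r5, r6⟩ := P3 m2 hm2 le_rfl
    have st2 := E.steps m2
    rw [hsm2] at st2
    have heq2 := stepSpinAcquire st2 r4 r6 r5 r3
    have D1 : (E.states (m2 + 1)).pc t = PC.exitSpin := by
      rw [heq2]; show Function.update _ T _ t = _
      rw [Function.update_of_ne htT]; exact r1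
    have D2 : (E.states (m2 + 1)).lk t = some L := by rw [heq2]; exact r2
    have D3 : (E.states (m2 + 1)).Grant t = none := by
      rw [heq2]; simp [Function.update_self]
    -- Phase D: `Grant t` stays `none` until `t` is scheduled at `m3` and completes.
    obtain ⟨m3, hm3, hsm3, hmin3⟩ := exists_least_sched E (m2 + 1) t (by rw [D1]; simp)
    have P4 : ∀ k, m2 + 1 ≤ k → k ≤ m3 →
        ((E.states k).pc t = PC.exitSpin ∧ (E.states k).lk t = some L ∧
         (E.states k).Grant t = none) := by
      refine propagate _ (m2 + 1) (fun _ => ⟨D1, D2, D3⟩) ?_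
      intro k hk ih hk1
      have hk0 : k < m3 := hk1
      obtain ⟨p1, p2, p3⟩ := ih (Nat.le_of_lt hk0)
      have hnet : t ≠ E.sched k := fun hc => hmin3 k hk hk0 hc.symm
      obtain ⟨e1, e2, _⟩ := frame (E.steps k) hnet
      have hgr : (E.states (k + 1)).Grant t = (E.states k).Grant t := by
        refine grantFrame (E.steps k) (fun _ hc => hnet hc.symm) ?_
        intro hpcu hpu
        exact (inv k).i9 t (E.sched k) p1 p3 hpcu hpu
      exact ⟨by rw [e1]; exact p1, by rw [e2]; exact p2, by rw [hgr]; exact p3⟩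
    obtain ⟨s1, s2, s3⟩ := P4 m3 hm3 le_rfl
    have st3 := E.steps m3
    rw [hsm3] at st3
    have heq3 := stepExitDone st3 s1 s3
    refine ⟨m3, by omega, ⟨hsm3, s2, by rw [s1]; simp, ?_⟩, Or.inr ⟨s1, s3⟩⟩
    rw [heq3]; simp [Function.update_self]


end Hemlock
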